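/- Let f : ℝⁿ → ℝ be a three times continuously differentiable convex function that is M-self-concordant (M > 0). Then for all x, d ∈ ℝⁿ and all t ≥ 0: (i) ∇f(x+td)ᵀd ≥ ∇f(x)ᵀd + t‖d‖ₓ²/(1 + Mt‖d‖ₓ) and (ii) f(x+td) ≥ f(x) + t∇f(x)ᵀd + ω(Mt‖d‖ₓ)/M²; moreover, for all t ≥ 0 with Mt‖d‖ₓ < 1: (iii) ∇f(x+td)ᵀd ≤ ∇f(x)ᵀd + t‖d‖ₓ²/(1 − Mt‖d‖ₓ) and (iv) f(x+td) ≤ f(x) + t∇f(x)ᵀd + ω*(Mt‖d‖ₓ)/M². -/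

import Mathlib

noncomputable section

open scoped BigOperators Classical

/-- Vectors in `ℝⁿ` with the Euclidean norm. -/
abbrev V (n : ℕ) := EuclideanSpace ℝ (Fin n)

/-- The Euclidean dot product `uᵀv`. -/
def dot {n : ℕ} (u v : V n) : ℝ := ∑ i, u i * v i

/-- The Hessian quadratic form `dᵀ∇²f(x)d`. -/
def hessQ {n : ℕ} (f : V n → ℝ) (x d : V n) : ℝ := iteratedFDeriv ℝ 2 f x ![d, d]

/-- The weighted norm `‖d‖ₓ = (dᵀ∇²f(x)d)^{1/2}`. -/
def wnorm {n : ℕ} (f : V n → ℝ) (x d : V n) : ℝ := Real.sqrt (hessQ f x d)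

/-- `f` is `μ`-strongly convex. -/
def StrongConvex {n : ℕ} (μ : ℝ) (f : V n → ℝ) : Prop :=
  ∀ x y : V n, ∀ l : ℝ, 0 ≤ l → l ≤ 1 →
    f (l • x + (1 - l) • y) ≤ l * f x + (1 - l) * f y - l * (1 - l) * μ / 2 * ‖x - y‖ ^ 2

/-- `f` has `L`-Lipschitz continuous gradient. -/
def LipschitzGrad {n : ℕ} (L : ℝ) (f : V n → ℝ) : Prop :=
  ∀ x y : V n, ‖gradient f x - gradient f y‖ ≤ L * ‖x - y‖

/-- `f` is `M`-self-concordant: `|D³f(x)[d,d,d]| ≤ 2M (dᵀ∇²f(x)d)^{3/2}`. -/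
def SelfConcordant {n : ℕ} (M : ℝ) (f : V n → ℝ) : Prop :=
  ∀ x d : V n, |iteratedFDeriv ℝ 3 f x ![d, d, d]| ≤ 2 * M * hessQ f x d ^ ((3 : ℝ) / 2)

/-- `f` has `L₂`-Lipschitz continuous Hessian. -/
def LipschitzHessian {n : ℕ} (L₂ : ℝ) (f : V n → ℝ) : Prop :=
  ∀ x y : V n, ‖iteratedFDeriv ℝ 2 f x - iteratedFDeriv ℝ 2 f y‖ ≤ L₂ * ‖x - y‖

/-- `ω(z) = z - ln(1+z)`. -/
def omegaFn (z : ℝ) : ℝ := z - Real.log (1 + z)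

/-- `ω⋆(z) = -z - ln(1-z)`. -/
def omegaStar (z : ℝ) : ℝ := -z - Real.log (1 - z)

/-- Matrix–vector multiplication acting on Euclidean space. -/
def mulv {n : ℕ} (A : Matrix (Fin n) (Fin n) ℝ) (v : V n) : V n :=
  (EuclideanSpace.equiv (Fin n) ℝ).symm (A.mulVec (EuclideanSpace.equiv (Fin n) ℝ v))

/-- `g_k = ∇f(x_k)`. -/
def gvec {n : ℕ} (f : V n → ℝ) (x : ℕ → V n) (k : ℕ) : V n := gradient f (x k)

/-- `d_k = -B_k⁻¹ g_k`. -/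
def dvec {n : ℕ} (f : V n → ℝ) (x : ℕ → V n) (B : ℕ → Matrix (Fin n) (Fin n) ℝ) (k : ℕ) : V n :=
  -(mulv (B k)⁻¹ (gvec f x k))

/-- `η_k = -g_kᵀd_k / ‖d_k‖_{x_k}`. -/
def etaSeq {n : ℕ} (f : V n → ℝ) (x : ℕ → V n) (B : ℕ → Matrix (Fin n) (Fin n) ℝ) (k : ℕ) : ℝ :=
  -(dot (gvec f x k) (dvec f x B k)) / wnorm f (x k) (dvec f x B k)

/-- The adaptive step size `t_k = η_k / ((1 + M η_k) ‖d_k‖_{x_k})`. -/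
def tSeq {n : ℕ} (f : V n → ℝ) (M : ℝ) (x : ℕ → V n) (B : ℕ → Matrix (Fin n) (Fin n) ℝ)
    (k : ℕ) : ℝ :=
  etaSeq f x B k / ((1 + M * etaSeq f x B k) * wnorm f (x k) (dvec f x B k))

/-- `s_k = x_{k+1} - x_k`. -/
def svec {n : ℕ} (x : ℕ → V n) (k : ℕ) : V n := x (k + 1) - x k

/-- `y_k = g_{k+1} - g_k`. -/
def yvec {n : ℕ} (f : V n → ℝ) (x : ℕ → V n) (k : ℕ) : V n := gvec f x (k + 1) - gvec f x k

/-- The outer product `u vᵀ`. -/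
def outer {n : ℕ} (u v : V n) : Matrix (Fin n) (Fin n) ℝ := Matrix.of fun i j => u i * v j

/-- The adaptive BFGS method (Algorithm 1). -/
structure AdaptiveBFGS {n : ℕ} (f : V n → ℝ) (M : ℝ) (x : ℕ → V n)
    (B : ℕ → Matrix (Fin n) (Fin n) ℝ) : Prop where
  posdef : (B 0).PosDef
  step : ∀ k, x (k + 1) = x k + tSeq f M x B k • dvec f x B k
  update : ∀ k, B (k + 1) =
    B k - (dot (svec x k) (mulv (B k) (svec x k)))⁻¹ • (B k * outer (svec x k) (svec x k) * B k)
      + (dot (yvec f x k) (svec x k))⁻¹ • outer (yvec f x k) (yvec f x k)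

/-- `α_k = ‖d_k‖_{x_k} / (√L ‖d_k‖)`. -/
def alphaSeq {n : ℕ} (f : V n → ℝ) (L : ℝ) (x : ℕ → V n) (B : ℕ → Matrix (Fin n) (Fin n) ℝ)
    (k : ℕ) : ℝ :=
  wnorm f (x k) (dvec f x B k) / (Real.sqrt L * ‖dvec f x B k‖)

/-- The smoothness aided adaptive step size `t̃_k`. -/
def ttSeq {n : ℕ} (f : V n → ℝ) (M L : ℝ) (x : ℕ → V n) (B : ℕ → Matrix (Fin n) (Fin n) ℝ)
    (k : ℕ) : ℝ :=
  if (1 + M * etaSeq f x B k) * alphaSeq f L x B k ≤ 1 then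
    etaSeq f x B k / ((1 + M * etaSeq f x B k) * wnorm f (x k) (dvec f x B k))
  else
    (M * etaSeq f x B k * alphaSeq f L x B k ^ 2 + (1 - alphaSeq f L x B k) ^ 2)
      / (M * wnorm f (x k) (dvec f x B k))

/-- The smoothness aided adaptive BFGS method SA²-BFGS (Algorithm 3). -/
structure SA2BFGS {n : ℕ} (f : V n → ℝ) (M L : ℝ) (x : ℕ → V n)
    (B : ℕ → Matrix (Fin n) (Fin n) ℝ) : Prop where
  posdef : (B 0).PosDef
  step : ∀ k, x (k + 1) = x k + ttSeq f M L x B k • dvec f x B k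
  update : ∀ k, B (k + 1) =
    B k - (dot (svec x k) (mulv (B k) (svec x k)))⁻¹ • (B k * outer (svec x k) (svec x k) * B k)
      + (dot (yvec f x k) (svec x k))⁻¹ • outer (yvec f x k) (yvec f x k)

/-- The positive semidefinite square root of a positive semidefinite matrix
(the definition of `Matrix.PosSemidef.sqrt` in the older Mathlib, since removed). -/
def psdSqrt {m : Type*} [Fintype m] [DecidableEq m] {A : Matrix m m ℝ} (hA : A.PosSemidef) :
    Matrix m m ℝ :=
  hA.1.eigenvectorUnitary.1 * Matrix.diagonal ((↑) ∘ (√·) ∘ hA.1.eigenvalues) *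
    (star hA.1.eigenvectorUnitary : Matrix m m ℝ)

/-- `ĝ_k = P^{-1/2} g_k`. -/
def hatg {n : ℕ} (f : V n → ℝ) (x : ℕ → V n) (P : Matrix (Fin n) (Fin n) ℝ) (hP : P.PosDef)
    (k : ℕ) : V n :=
  mulv (psdSqrt hP.posSemidef)⁻¹ (gvec f x k)

/-- `ŝ_k = P^{1/2} s_k`. -/
def hats {n : ℕ} (x : ℕ → V n) (P : Matrix (Fin n) (Fin n) ℝ) (hP : P.PosDef) (k : ℕ) : V n :=
  mulv (psdSqrt hP.posSemidef) (svec x k)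

/-- `ŷ_k = P^{-1/2} y_k`. -/
def haty {n : ℕ} (f : V n → ℝ) (x : ℕ → V n) (P : Matrix (Fin n) (Fin n) ℝ) (hP : P.PosDef)
    (k : ℕ) : V n :=
  mulv (psdSqrt hP.posSemidef)⁻¹ (yvec f x k)

/-- `cos θ̂_k = -ĝ_kᵀŝ_k / (‖ĝ_k‖ ‖ŝ_k‖)`. -/
def cosθ {n : ℕ} (f : V n → ℝ) (x : ℕ → V n) (P : Matrix (Fin n) (Fin n) ℝ) (hP : P.PosDef)
    (k : ℕ) : ℝ :=
  -(dot (hatg f x P hP k) (hats x P hP k)) / (‖hatg f x P hP k‖ * ‖hats x P hP k‖)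

/-- `m̂_k = ŷ_kᵀŝ_k / ‖ŝ_k‖²`. -/
def mhat {n : ℕ} (f : V n → ℝ) (x : ℕ → V n) (P : Matrix (Fin n) (Fin n) ℝ) (hP : P.PosDef)
    (k : ℕ) : ℝ :=
  dot (haty f x P hP k) (hats x P hP k) / ‖hats x P hP k‖ ^ 2

/-- `q̂_k = ‖ĝ_k‖² / (f(x_k) - f(x*))`. -/
def qhat {n : ℕ} (f : V n → ℝ) (x : ℕ → V n) (xstar : V n) (P : Matrix (Fin n) (Fin n) ℝ)
    (hP : P.PosDef) (k : ℕ) : ℝ :=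
  ‖hatg f x P hP k‖ ^ 2 / (f (x k) - f xstar)

/-- The potential function `Ψ(A) = tr(A) - ln det(A) - n`. -/
def Psi {n : ℕ} (A : Matrix (Fin n) (Fin n) ℝ) : ℝ := A.trace - Real.log A.det - n

/-- The Hessian matrix `∇²f(x)` in the standard basis. -/
def hessMatrix {n : ℕ} (f : V n → ℝ) (x : V n) : Matrix (Fin n) (Fin n) ℝ :=
  Matrix.of fun i j =>
    iteratedFDeriv ℝ 2 f x ![EuclideanSpace.single i (1 : ℝ), EuclideanSpace.single j (1 : ℝ)]

/-!
Restrict `f` to the line `φ s = f (x + s • d)`. Self-concordance reads `|φ'''| ≤ 2 M (φ'')^{3/2}`,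
so `s ↦ (φ'' s)^{-1/2}` is `M`-Lipschitz as long as `φ''` stays positive; and `φ''` can neither
reach `0` from a positive value nor leave `0`, because on a compact interval `|φ'''| ≤ K φ''`
(Grönwall). This sandwiches `φ'' s` between `a² / (1 ± M s a)²`, `a = ‖d‖ₓ`, and integrating once
and twice gives the bounds on `∇f(x + t d)ᵀd` and on `f (x + t d)`.
-/

open Set Real

theorem le_of_hasDerivAt_le {f g f' g' : ℝ → ℝ} {t : ℝ} (ht : 0 ≤ t)
    (hf : ∀ s ∈ Icc 0 t, HasDerivAt f (f' s) s) (hg : ∀ s ∈ Icc 0 t, HasDerivAt g (g' s) s)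
    (h0 : f 0 ≤ g 0) (hle : ∀ s ∈ Icc 0 t, f' s ≤ g' s) : f t ≤ g t :=
  image_le_of_deriv_right_le_deriv_boundary
    (fun s hs => (hf s hs).continuousAt.continuousWithinAt)
    (fun s hs => (hf s (Ico_subset_Icc_self hs)).hasDerivWithinAt) h0
    (fun s hs => (hg s hs).continuousAt.continuousWithinAt)
    (fun s hs => (hg s (Ico_subset_Icc_self hs)).hasDerivWithinAt)
    (fun s hs => hle s (Ico_subset_Icc_self hs)) (right_mem_Icc.2 ht)

theorem hasDerivAt_exp_mul (K s : ℝ) : HasDerivAt (fun r => exp (K * r)) (exp (K * s) * K) s := by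
  simpa using ((hasDerivAt_id s).const_mul K).exp

theorem le_mul_exp_of_deriv_le {u u' : ℝ → ℝ} {K t : ℝ} (ht : 0 ≤ t)
    (hu : ∀ s ∈ Icc 0 t, HasDerivAt u (u' s) s) (hK : ∀ s ∈ Icc 0 t, u' s ≤ K * u s) :
    u t ≤ u 0 * exp (K * t) := by
  have key : u t * exp (-K * t) ≤ u 0 * exp (-K * 0) :=
    le_of_hasDerivAt_le (f := fun s => u s * exp (-K * s)) (g := fun _ => u 0 * exp (-K * 0)) ht
      (fun s hs => (hu s hs).mul (hasDerivAt_exp_mul (-K) s)) (fun s _ => hasDerivAt_const s _)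
      le_rfl (fun s hs => by nlinarith [hK s hs, exp_pos (-K * s)])
  rwa [mul_zero, exp_zero, mul_one, neg_mul, exp_neg, ← div_eq_mul_inv, div_le_iff₀ (exp_pos _)]
    at key

theorem mul_exp_neg_le_of_le_deriv {u u' : ℝ → ℝ} {K t : ℝ} (ht : 0 ≤ t)
    (hu : ∀ s ∈ Icc 0 t, HasDerivAt u (u' s) s) (hK : ∀ s ∈ Icc 0 t, -(K * u s) ≤ u' s) :
    u 0 * exp (-(K * t)) ≤ u t := by
  have key : u 0 * exp (K * 0) ≤ u t * exp (K * t) :=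
    le_of_hasDerivAt_le (f := fun _ => u 0 * exp (K * 0)) (g := fun s => u s * exp (K * s)) ht
      (fun s _ => hasDerivAt_const s _) (fun s hs => (hu s hs).mul (hasDerivAt_exp_mul K s))
      le_rfl (fun s hs => by nlinarith [hK s hs, exp_pos (K * s)])
  rwa [mul_zero, exp_zero, mul_one, ← div_le_iff₀ (exp_pos _), div_eq_mul_inv, ← exp_neg] at key

theorem rpow_three_halves {x : ℝ} (hx : 0 ≤ x) : x ^ (3 / 2 : ℝ) = x * √x := by
  rw [show (3 / 2 : ℝ) = 1 + 1 / 2 by norm_num, rpow_add' hx (by norm_num), rpow_one,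
    sqrt_eq_rpow]

section SelfConcordantCurvature

variable {M t : ℝ} {u u' : ℝ → ℝ}

theorem exists_abs_deriv_le_mul (hM : 0 ≤ M) (hu : Continuous u) (hu_nonneg : ∀ s, 0 ≤ u s)
    (hsc : ∀ s, |u' s| ≤ 2 * M * u s ^ (3 / 2 : ℝ)) (a b : ℝ) :
    ∃ K, ∀ s ∈ Icc a b, |u' s| ≤ K * u s := by
  obtain ⟨C, hC⟩ := isCompact_Icc.exists_bound_of_continuousOn (hu.continuousOn (s := Icc a b))
  refine ⟨2 * M * √C, fun s hs => (hsc s).trans ?_⟩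
  have : √(u s) ≤ √C := sqrt_le_sqrt ((le_abs_self _).trans (hC s hs))
  rw [rpow_three_halves (hu_nonneg s)]
  have := mul_nonneg (mul_nonneg (by norm_num : (0:ℝ) ≤ 2) hM) (hu_nonneg s)
  nlinarith

theorem pos_of_abs_deriv_le_rpow (hM : 0 ≤ M) (hu : ∀ s, HasDerivAt u (u' s) s)
    (hu_nonneg : ∀ s, 0 ≤ u s) (hsc : ∀ s, |u' s| ≤ 2 * M * u s ^ (3 / 2 : ℝ))
    (h0 : 0 < u 0) (ht : 0 ≤ t) : 0 < u t := by
  obtain ⟨K, hK⟩ := exists_abs_deriv_le_mul hM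
    (Differentiable.continuous fun s => (hu s).differentiableAt) hu_nonneg hsc 0 t
  exact (mul_pos h0 (exp_pos _)).trans_le
    (mul_exp_neg_le_of_le_deriv ht (fun s _ => hu s) fun s hs => neg_le_of_abs_le (hK s hs))

theorem eq_zero_of_abs_deriv_le_rpow (hM : 0 ≤ M) (hu : ∀ s, HasDerivAt u (u' s) s)
    (hu_nonneg : ∀ s, 0 ≤ u s) (hsc : ∀ s, |u' s| ≤ 2 * M * u s ^ (3 / 2 : ℝ))
    (h0 : u 0 = 0) (ht : 0 ≤ t) : u t = 0 := by
  obtain ⟨K, hK⟩ := exists_abs_deriv_le_mul hM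
    (Differentiable.continuous fun s => (hu s).differentiableAt) hu_nonneg hsc 0 t
  refine le_antisymm ?_ (hu_nonneg t)
  simpa [h0] using
    le_mul_exp_of_deriv_le ht (fun s _ => hu s) fun s hs => (le_abs_self _).trans (hK s hs)

theorem abs_inv_sqrt_sub_inv_sqrt_le (hM : 0 ≤ M) (hu : ∀ s, HasDerivAt u (u' s) s)
    (hu_nonneg : ∀ s, 0 ≤ u s) (hsc : ∀ s, |u' s| ≤ 2 * M * u s ^ (3 / 2 : ℝ))
    (h0 : 0 < u 0) (ht : 0 ≤ t) : |(√(u t))⁻¹ - (√(u 0))⁻¹| ≤ M * t := by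
  have hpos : ∀ s ∈ Icc 0 t, 0 < u s := fun s hs =>
    pos_of_abs_deriv_le_rpow hM hu hu_nonneg hsc h0 hs.1
  have hderiv : ∀ s ∈ Icc 0 t, HasDerivAt (fun r => (√(u r))⁻¹)
      (-(u' s / (2 * √(u s))) / √(u s) ^ 2) s := fun s hs =>
    ((hu s).sqrt (hpos s hs).ne').inv (sqrt_pos.2 (hpos s hs)).ne'
  have hbound : ∀ s ∈ Icc 0 t, ‖-(u' s / (2 * √(u s))) / √(u s) ^ 2‖ ≤ M := fun s hs => by
    have hq := sqrt_pos.2 (hpos s hs)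
    have hsc' := hsc s
    rw [rpow_three_halves (hu_nonneg s)] at hsc'
    rw [Real.norm_eq_abs, abs_div, abs_neg, abs_div, abs_of_pos (by positivity : 0 < 2 * √(u s)),
      abs_of_pos (by positivity : 0 < √(u s) ^ 2), div_div, div_le_iff₀ (by positivity),
      sq_sqrt (hu_nonneg s)]
    linarith
  simpa [abs_of_nonneg ht] using Convex.norm_image_sub_le_of_norm_hasDerivWithin_le
    (fun s hs => (hderiv s hs).hasDerivWithinAt) hbound (convex_Icc 0 t) (left_mem_Icc.2 ht)
    (right_mem_Icc.2 ht)

theorem sqrt_sq_div_one_add_sq_le (hM : 0 ≤ M) (hu : ∀ s, HasDerivAt u (u' s) s)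
    (hu_nonneg : ∀ s, 0 ≤ u s) (hsc : ∀ s, |u' s| ≤ 2 * M * u s ^ (3 / 2 : ℝ)) (ht : 0 ≤ t) :
    √(u 0) ^ 2 / (1 + M * t * √(u 0)) ^ 2 ≤ u t := by
  rcases (hu_nonneg 0).eq_or_lt with h0 | h0
  · simp [← h0, hu_nonneg t]
  have hψ := (abs_le.1 (abs_inv_sqrt_sub_inv_sqrt_le hM hu hu_nonneg hsc h0 ht)).2
  have hut := sqrt_pos.2 (pos_of_abs_deriv_le_rpow hM hu hu_nonneg hsc h0 ht)
  have hsqrt : √(u 0) / (1 + M * t * √(u 0)) ≤ √(u t) := by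
    rw [div_le_iff₀ (by positivity)]
    field_simp at hψ
    linarith
  calc √(u 0) ^ 2 / (1 + M * t * √(u 0)) ^ 2 = (√(u 0) / (1 + M * t * √(u 0))) ^ 2 :=
        (div_pow ..).symm
    _ ≤ √(u t) ^ 2 := by gcongr
    _ = u t := sq_sqrt (hu_nonneg t)

theorem le_sqrt_sq_div_one_sub_sq (hM : 0 ≤ M) (hu : ∀ s, HasDerivAt u (u' s) s)
    (hu_nonneg : ∀ s, 0 ≤ u s) (hsc : ∀ s, |u' s| ≤ 2 * M * u s ^ (3 / 2 : ℝ)) (ht : 0 ≤ t)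
    (hlt : M * t * √(u 0) < 1) :
    u t ≤ √(u 0) ^ 2 / (1 - M * t * √(u 0)) ^ 2 := by
  rcases (hu_nonneg 0).eq_or_lt with h0 | h0
  · rw [eq_zero_of_abs_deriv_le_rpow hM hu hu_nonneg hsc h0.symm ht]
    positivity
  have hψ := (abs_le.1 (abs_inv_sqrt_sub_inv_sqrt_le hM hu hu_nonneg hsc h0 ht)).1
  have hut := sqrt_pos.2 (pos_of_abs_deriv_le_rpow hM hu hu_nonneg hsc h0 ht)
  have hsqrt : √(u t) ≤ √(u 0) / (1 - M * t * √(u 0)) := by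
    rw [le_div_iff₀ (by linarith)]
    field_simp at hψ
    linarith
  calc u t = √(u t) ^ 2 := (sq_sqrt (hu_nonneg t)).symm
    _ ≤ (√(u 0) / (1 - M * t * √(u 0))) ^ 2 := by gcongr
    _ = √(u 0) ^ 2 / (1 - M * t * √(u 0)) ^ 2 := div_pow ..

end SelfConcordantCurvature

theorem hasDerivAt_omegaFn {z : ℝ} (hz : 1 + z ≠ 0) : HasDerivAt omegaFn (z / (1 + z)) z := by
  refine ((hasDerivAt_id z).sub (((hasDerivAt_id z).const_add 1).log hz)).congr_deriv ?_
  simp only [id]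
  field_simp
  ring

theorem hasDerivAt_omegaStar {z : ℝ} (hz : 1 - z ≠ 0) : HasDerivAt omegaStar (z / (1 - z)) z := by
  refine ((hasDerivAt_id z).neg.sub (((hasDerivAt_id z).const_sub 1).log hz)).congr_deriv ?_
  simp only [id]
  field_simp
  ring

section Integration

variable {φ φ' φ'' : ℝ → ℝ} {M a t : ℝ}

theorem add_mul_sq_div_one_add_le (hM : 0 ≤ M) (ha : 0 ≤ a) (ht : 0 ≤ t)
    (hφ' : ∀ s ∈ Icc 0 t, HasDerivAt φ' (φ'' s) s)
    (hφ'' : ∀ s ∈ Icc 0 t, a ^ 2 / (1 + M * s * a) ^ 2 ≤ φ'' s) :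
    φ' 0 + t * a ^ 2 / (1 + M * t * a) ≤ φ' t := by
  refine le_of_hasDerivAt_le (f := fun s => φ' 0 + s * a ^ 2 / (1 + M * s * a)) ht
    (fun s hs => ?_) hφ' (by simp) hφ''
  have hden : 0 < 1 + M * s * a := by have := hs.1; positivity
  refine ((((hasDerivAt_id s).mul_const (a ^ 2)).div
    (((hasDerivAt_id s).const_mul M).mul_const a |>.const_add 1) hden.ne').const_add
      (φ' 0)).congr_deriv ?_
  simp only [id]
  field_simp
  ring

theorem le_add_mul_sq_div_one_sub (hM : 0 ≤ M) (ha : 0 ≤ a) (ht : 0 ≤ t)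
    (hlt : M * t * a < 1) (hφ' : ∀ s ∈ Icc 0 t, HasDerivAt φ' (φ'' s) s)
    (hφ'' : ∀ s ∈ Icc 0 t, φ'' s ≤ a ^ 2 / (1 - M * s * a) ^ 2) :
    φ' t ≤ φ' 0 + t * a ^ 2 / (1 - M * t * a) := by
  refine le_of_hasDerivAt_le (g := fun s => φ' 0 + s * a ^ 2 / (1 - M * s * a)) ht
    hφ' (fun s hs => ?_) (by simp) hφ''
  have hden : 0 < 1 - M * s * a := by
    have : M * s * a ≤ M * t * a := by have := hs.2; gcongr
    linarith
  refine ((((hasDerivAt_id s).mul_const (a ^ 2)).div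
    (((hasDerivAt_id s).const_mul M).mul_const a |>.const_sub 1) hden.ne').const_add
      (φ' 0)).congr_deriv ?_
  simp only [id]
  field_simp
  ring

theorem add_omegaFn_le (hM : 0 < M) (ha : 0 ≤ a) (ht : 0 ≤ t)
    (hφ : ∀ s ∈ Icc 0 t, HasDerivAt φ (φ' s) s)
    (hφ' : ∀ s ∈ Icc 0 t, φ' 0 + s * a ^ 2 / (1 + M * s * a) ≤ φ' s) :
    φ 0 + t * φ' 0 + omegaFn (M * t * a) / M ^ 2 ≤ φ t := by
  refine le_of_hasDerivAt_le (f := fun s => φ 0 + s * φ' 0 + omegaFn (M * s * a) / M ^ 2) ht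
    (fun s hs => ?_) hφ (by simp [omegaFn]) hφ'
  have hden : 0 < 1 + M * s * a := by have := hs.1; positivity
  refine ((((hasDerivAt_id s).mul_const (φ' 0)).const_add (φ 0)).add
    (((hasDerivAt_omegaFn hden.ne').comp s
      (((hasDerivAt_id s).const_mul M).mul_const a)).div_const (M ^ 2))).congr_deriv ?_
  field_simp

theorem le_add_omegaStar (hM : 0 < M) (ha : 0 ≤ a) (ht : 0 ≤ t) (hlt : M * t * a < 1)
    (hφ : ∀ s ∈ Icc 0 t, HasDerivAt φ (φ' s) s)
    (hφ' : ∀ s ∈ Icc 0 t, φ' s ≤ φ' 0 + s * a ^ 2 / (1 - M * s * a)) :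
    φ t ≤ φ 0 + t * φ' 0 + omegaStar (M * t * a) / M ^ 2 := by
  refine le_of_hasDerivAt_le (g := fun s => φ 0 + s * φ' 0 + omegaStar (M * s * a) / M ^ 2) ht
    hφ (fun s hs => ?_) (by simp [omegaStar]) hφ'
  have hden : 0 < 1 - M * s * a := by
    have : M * s * a ≤ M * t * a := by have := hs.2; gcongr
    linarith
  refine ((((hasDerivAt_id s).mul_const (φ' 0)).const_add (φ 0)).add
    (((hasDerivAt_omegaStar hden.ne').comp s
      (((hasDerivAt_id s).const_mul M).mul_const a)).div_const (M ^ 2))).congr_deriv ?_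
  field_simp

end Integration

theorem selfConcordant_line_bounds {φ φ' φ'' φ''' : ℝ → ℝ} {M t : ℝ} (hM : 0 < M)
    (hφ : ∀ s, HasDerivAt φ (φ' s) s) (hφ' : ∀ s, HasDerivAt φ' (φ'' s) s)
    (hφ'' : ∀ s, HasDerivAt φ'' (φ''' s) s) (hnn : ∀ s, 0 ≤ φ'' s)
    (hsc : ∀ s, |φ''' s| ≤ 2 * M * φ'' s ^ (3 / 2 : ℝ)) (ht : 0 ≤ t) :
    φ' 0 + t * √(φ'' 0) ^ 2 / (1 + M * t * √(φ'' 0)) ≤ φ' t ∧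
      φ 0 + t * φ' 0 + omegaFn (M * t * √(φ'' 0)) / M ^ 2 ≤ φ t ∧
      (M * t * √(φ'' 0) < 1 →
        φ' t ≤ φ' 0 + t * √(φ'' 0) ^ 2 / (1 - M * t * √(φ'' 0)) ∧
        φ t ≤ φ 0 + t * φ' 0 + omegaStar (M * t * √(φ'' 0)) / M ^ 2) := by
  have ha : 0 ≤ √(φ'' 0) := sqrt_nonneg _
  have hgrad_lower : ∀ s ∈ Icc 0 t, φ' 0 + s * √(φ'' 0) ^ 2 / (1 + M * s * √(φ'' 0)) ≤ φ' s :=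
    fun s hs => add_mul_sq_div_one_add_le hM.le ha hs.1 (fun r _ => hφ' r)
      fun r hr => sqrt_sq_div_one_add_sq_le hM.le hφ'' hnn hsc hr.1
  refine ⟨hgrad_lower t (right_mem_Icc.2 ht), add_omegaFn_le hM ha ht (fun s _ => hφ s) hgrad_lower,
    fun hlt => ?_⟩
  have hlt_of_le : ∀ s ∈ Icc 0 t, M * s * √(φ'' 0) < 1 := fun s hs =>
    lt_of_le_of_lt (by have := hs.2; gcongr) hlt
  have hgrad_upper : ∀ s ∈ Icc 0 t, φ' s ≤ φ' 0 + s * √(φ'' 0) ^ 2 / (1 - M * s * √(φ'' 0)) :=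
    fun s hs => le_add_mul_sq_div_one_sub hM.le ha hs.1 (hlt_of_le s hs) (fun r _ => hφ' r)
      fun r hr => le_sqrt_sq_div_one_sub_sq hM.le hφ'' hnn hsc hr.1
        (hlt_of_le r ⟨hr.1, hr.2.trans hs.2⟩)
  exact ⟨hgrad_upper t (right_mem_Icc.2 ht), le_add_omegaStar hM ha ht hlt (fun s _ => hφ s)
    hgrad_upper⟩

theorem hasDerivAt_iteratedFDeriv_add_smul {E F : Type*} [NormedAddCommGroup E] [NormedSpace ℝ E]
    [NormedAddCommGroup F] [NormedSpace ℝ F] {f : E → F} {k : ℕ} (hf : ContDiff ℝ (k + 1) f)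
    (x d : E) (s : ℝ) :
    HasDerivAt (fun r : ℝ => iteratedFDeriv ℝ k f (x + r • d) fun _ => d)
      (iteratedFDeriv ℝ (k + 1) f (x + s • d) fun _ => d) s := by
  have hline : HasDerivAt (fun r : ℝ => x + r • d) d s := by
    simpa using ((hasDerivAt_id s).smul_const d).const_add x
  have hdiff := hf.differentiable_iteratedFDeriv (m := k) (by norm_cast; omega) (x + s • d)
  rw [iteratedFDeriv_succ_apply_left]
  exact (ContinuousMultilinearMap.apply ℝ (fun _ : Fin k => E) F fun _ => d).hasFDerivAt
    |>.comp_hasDerivAt s (hdiff.hasFDerivAt.comp_hasDerivAt s hline)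

section Line

variable {n : ℕ} {f : V n → ℝ}

theorem dot_gradient (y v : V n) : dot (gradient f y) v = fderiv ℝ f y v := by
  rw [gradient, ← InnerProductSpace.toDual_symm_apply (𝕜 := ℝ)]
  simp only [dot, PiLp.inner_apply, RCLike.inner_apply, conj_trivial]
  exact Finset.sum_congr rfl fun i _ => mul_comm _ _

theorem hasDerivAt_apply_add_smul (hf : ContDiff ℝ 1 f) (x d : V n) (s : ℝ) :
    HasDerivAt (fun r : ℝ => f (x + r • d)) (dot (gradient f (x + s • d)) d) s := by
  simpa [dot_gradient, iteratedFDeriv_one_apply] using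
    hasDerivAt_iteratedFDeriv_add_smul (k := 0) hf x d s

theorem hasDerivAt_dot_gradient_add_smul (hf : ContDiff ℝ 2 f) (x d : V n) (s : ℝ) :
    HasDerivAt (fun r : ℝ => dot (gradient f (x + r • d)) d) (hessQ f (x + s • d) d) s := by
  simpa [dot_gradient, iteratedFDeriv_one_apply, hessQ, Matrix.vec_single_eq_const,
    Matrix.vecCons_const] using
    hasDerivAt_iteratedFDeriv_add_smul (k := 1) hf x d s

theorem hasDerivAt_hessQ_add_smul (hf : ContDiff ℝ 3 f) (x d : V n) (s : ℝ) :
    HasDerivAt (fun r : ℝ => hessQ f (x + r • d) d)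
      (iteratedFDeriv ℝ 3 f (x + s • d) ![d, d, d]) s := by
  simpa only [hessQ, Matrix.vec_single_eq_const, Matrix.vecCons_const] using
    hasDerivAt_iteratedFDeriv_add_smul (k := 2) hf x d s

theorem hessQ_nonneg (hconv : ConvexOn ℝ univ f) (hf : ContDiff ℝ 2 f) (x d : V n) :
    0 ≤ hessQ f x d := by
  have hline : ConvexOn ℝ univ fun r : ℝ => f (x + r • d) := by
    simpa [Function.comp_def, AffineMap.lineMap_apply, add_comm] using
      hconv.comp_affineMap (AffineMap.lineMap x (x + d))
  have hderiv := hasDerivAt_apply_add_smul (hf.of_le (by norm_num)) x d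
  have hmono : Monotone fun r : ℝ => dot (gradient f (x + r • d)) d := by
    rw [← monotoneOn_univ, ← funext fun r => (hderiv r).deriv]
    exact hline.monotoneOn_deriv fun r _ => (hderiv r).differentiableAt
  simpa using (hasDerivAt_dot_gradient_add_smul hf x d 0).nonneg_of_monotone hmono

end Line

theorem stmt0 {n : ℕ} (f : V n → ℝ) (M : ℝ) (hM : 0 < M)
    (hf : ContDiff ℝ 3 f) (hconv : ConvexOn ℝ Set.univ f)
    (hself : SelfConcordant M f) :
    ∀ (x d : V n) (t : ℝ), 0 ≤ t →
      (dot (gradient f (x + t • d)) d ≥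
        dot (gradient f x) d + t * wnorm f x d ^ 2 / (1 + M * t * wnorm f x d)) ∧
      (f (x + t • d) ≥
        f x + t * dot (gradient f x) d + omegaFn (M * t * wnorm f x d) / M ^ 2) ∧
      (M * t * wnorm f x d < 1 →
        (dot (gradient f (x + t • d)) d ≤
          dot (gradient f x) d + t * wnorm f x d ^ 2 / (1 - M * t * wnorm f x d)) ∧
        (f (x + t • d) ≤
          f x + t * dot (gradient f x) d + omegaStar (M * t * wnorm f x d) / M ^ 2)) := by
  intro x d t ht
  have hx : x + (0 : ℝ) • d = x := by rw [zero_smul, add_zero]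
  simpa only [hx, wnorm, ge_iff_le] using selfConcordant_line_bounds hM
    (hasDerivAt_apply_add_smul (hf.of_le (by norm_num)) x d)
    (hasDerivAt_dot_gradient_add_smul (hf.of_le (by norm_num)) x d)
    (hasDerivAt_hessQ_add_smul hf x d)
    (fun s => hessQ_nonneg hconv (hf.of_le (by norm_num)) (x + s • d) d)
    (fun s => hself (x + s • d) d) ht
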